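/- Let C and D be categories and F, G : C → D functors. Then F and G are naturally isomorphic if and only if the comma categories (F ↓ D) and (G ↓ D) are equivalent as categories over C × D (i.e., there is an equivalence commuting with the projections sending (X, A, η) to (X, A)). -/

import Mathlib

/-!
The functor `X ↦ (X, F X, 𝟙)` is left adjoint to the projection `(F ↓ D) ⥤ C`, and composing it
with the projection to `D` gives back `F`. An equivalence `(F ↓ D) ≌ (G ↓ D)` over `C × D`
intertwines the projections to `C`, so by uniqueness of left adjoints it carries the section of
`F` to the section of `G`; projecting to `D` then gives `F ≅ G`.
-/

open CategoryTheory

namespace CategoryTheory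

variable {C : Type u₁} {D : Type u₂} [Category.{v₁} C] [Category.{v₂} D]

def Adjunction.leftAdjointUniqOfEquivalence {A B : Type*} [Category A] [Category B]
    {L : C ⥤ A} {R : A ⥤ C} {L' : C ⥤ B} {R' : B ⥤ C} (adj : L ⊣ R) (adj' : L' ⊣ R')
    (e : A ≌ B) (i : e.functor ⋙ R' ≅ R) : L ⋙ e.functor ≅ L' :=
  ((adj.comp e.toAdjunction).ofNatIsoRight i.symm.inverseCompIso).leftAdjointUniq adj'

namespace Comma

def idSection (F : C ⥤ D) : C ⥤ Comma F (𝟭 D) where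
  obj X := ⟨X, F.obj X, 𝟙 _⟩
  map f := ⟨f, F.map f, by simp⟩

def idSectionAdjunction (F : C ⥤ D) : idSection F ⊣ fst F (𝟭 D) :=
  Adjunction.mkOfHomEquiv
    { homEquiv X c :=
        { toFun m := m.left
          invFun f := ⟨f, F.map f ≫ c.hom, (Category.id_comp _).symm⟩
          left_inv m := hom_ext _ _ rfl (m.w.trans (Category.id_comp _))
          right_inv _ := rfl }
      homEquiv_naturality_left_symm f g := hom_ext _ _ rfl (F.map_comp_assoc f g _) }

def idSectionCompSnd (F : C ⥤ D) : idSection F ⋙ snd F (𝟭 D) ≅ F := Iso.refl _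

end Comma

end CategoryTheory

/-- Functors `F, G : C ⥤ D` are naturally isomorphic if and only if the comma
categories `(F ↓ D)` and `(G ↓ D)` are equivalent as categories over `C × D`, where the
projection sends `(X, A, η : F X ⟶ A)` to `(X, A)`. -/
theorem iso_iff_comma_equivalence_over_prod {C : Type u₁} {D : Type u₂}
    [Category.{v₁} C] [Category.{v₂} D] (F G : C ⥤ D) :
    Nonempty (F ≅ G) ↔
      ∃ e : Comma F (𝟭 D) ≌ Comma G (𝟭 D),
        Nonempty (e.functor ⋙ (Comma.fst G (𝟭 D)).prod' (Comma.snd G (𝟭 D)) ≅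
          (Comma.fst F (𝟭 D)).prod' (Comma.snd F (𝟭 D))) := by
  constructor
  · rintro ⟨i⟩
    exact ⟨Comma.mapLeftIso (𝟭 D) i, ⟨NatIso.ofComponents fun _ => Iso.refl _⟩⟩
  · rintro ⟨e, ⟨I⟩⟩
    let onFst : e.functor ⋙ Comma.fst G (𝟭 D) ≅ Comma.fst F (𝟭 D) :=
      Functor.isoWhiskerRight I (CategoryTheory.Prod.fst C D)
    let onSnd : e.functor ⋙ Comma.snd G (𝟭 D) ≅ Comma.snd F (𝟭 D) :=
      Functor.isoWhiskerRight I (CategoryTheory.Prod.snd C D)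
    let onSections : Comma.idSection F ⋙ e.functor ≅ Comma.idSection G :=
      (Comma.idSectionAdjunction F).leftAdjointUniqOfEquivalence
        (Comma.idSectionAdjunction G) e onFst
    exact ⟨(Comma.idSectionCompSnd F).symm ≪≫ Functor.isoWhiskerLeft _ onSnd.symm ≪≫
      (Functor.associator _ _ _).symm ≪≫ Functor.isoWhiskerRight onSections _ ≪≫
      Comma.idSectionCompSnd G⟩
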